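/- For q ≠ 1, q ≠ 2, λ ∈ ℝ, the function g(x) = (1-(1-q)λx²)/(2-q) solves g'(x) - 2λx (e_q(-λx²))^{q-1} g(x) + 2λx = 0 wherever 1-(1-q)λx² > 0. -/

import Mathlib

/-! Since e_q(-λx²)^(q-1) = (1 - (1-q)λx²)⁻¹, the middle term of the equation is 2λx/(2-q)
and the equation reduces to a rational identity in q. -/

lemma rpow_one_div_one_sub_rpow_sub_one {A q : ℝ} (hA : 0 < A) (hq : q ≠ 1) :
    (A ^ ((1 : ℝ) / (1 - q))) ^ (q - 1) = A⁻¹ := by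
  have h1q : (1 : ℝ) - q ≠ 0 := sub_ne_zero.mpr hq.symm
  have hexp : (1 : ℝ) / (1 - q) * (q - 1) = -1 := by
    field_simp
    ring
  rw [← Real.rpow_mul hA.le, hexp, Real.rpow_neg_one]

lemma hasDerivAt_one_sub_mul_sq_div (c k x : ℝ) :
    HasDerivAt (fun y : ℝ => (1 - c * y ^ 2) / k) (-(c * (2 * x)) / k) x := by
  have h := ((hasDerivAt_pow 2 x).const_mul c).const_sub 1
  simp only [Nat.cast_ofNat, Nat.add_one_sub_one, pow_one] at h
  exact h.div_const k

/-- Variance constraint h(x) = x²: g(x) = (1-(1-q)λx²)/(2-q) solves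
    g'(x) - 2λx (e_q(-λx²))^{q-1} g(x) + 2λx = 0 wherever 1-(1-q)λx² > 0. -/
theorem g_solves_ode_variance (q lam : ℝ) (hq1 : q ≠ 1) (hq2 : q ≠ 2) :
    ∀ x : ℝ, 1 - (1 - q) * lam * x ^ 2 > 0 →
      ∃ d : ℝ, HasDerivAt (fun y : ℝ => (1 - (1 - q) * lam * y ^ 2) / (2 - q)) d x ∧
        d - 2 * lam * x * (((1 - (1 - q) * lam * x ^ 2) ^ ((1 : ℝ) / (1 - q))) ^ (q - 1))
              * ((1 - (1 - q) * lam * x ^ 2) / (2 - q)) + 2 * lam * x = 0 := by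
  intro x hx
  refine ⟨_, hasDerivAt_one_sub_mul_sq_div ((1 - q) * lam) (2 - q) x, ?_⟩
  rw [rpow_one_div_one_sub_rpow_sub_one hx hq1]
  have h2q : (2 : ℝ) - q ≠ 0 := sub_ne_zero.mpr hq2.symm
  field_simp
  ring
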